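/- arXiv:1810.03049 — 3 statements merged into one kernel-verified Lean document; each statement's English description precedes it below -/
import Mathlib

section
/- Let p(z) be a complex polynomial with only simple roots and no zeros in the open unit disk D. Then there is a continuous one-parameter family of polynomials p_t(z), t ∈ [0,1], with p_0 = p and p_1 the constant polynomial 1, such that for every t, p_t has no zeros in D and all roots of p_t are simple. -/
/-!
Shrink the variable: `p((1 - t) z)` has the roots of `p` scaled by `(1 - t)⁻¹`, so they stay
outside the unit disk and stay simple, and at `t = 1` the polynomial has become the constant
`p(0) ≠ 0`. Multiplying by the nonvanishing scalar `exp(-t log p(0))` makes the endpoint `1`.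
-/

open Polynomial Complex

theorem Squarefree.map_mulEquiv {M N : Type*} [Monoid M] [Monoid N] (f : M ≃* N) {x : M}
    (hx : Squarefree x) : Squarefree (f x) := by
  intro y hy
  have hdvd : f.symm y * f.symm y ∣ x := by
    simpa only [map_mul, MulEquiv.symm_apply_apply] using map_dvd f.symm hy
  simpa only [MulEquiv.apply_symm_apply] using (hx _ hdvd).map f

theorem Squarefree.comp_C_mul_X {R : Type*} [CommRing R] {p : R[X]} (hp : Squarefree p) {s : R}
    (hs : IsUnit s) : Squarefree (p.comp (C s * X)) := by
  let := hs.invertible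
  simpa [comp_eq_aeval] using hp.map_mulEquiv (algEquivCMulXAddC s 0).toMulEquiv

noncomputable def shrinkPath (p : ℂ[X]) (t : ℝ) : ℂ[X] :=
  C (exp (-(t * log (p.coeff 0)))) * p.comp (C (1 - t : ℂ) * X)

namespace shrinkPath

variable (p : ℂ[X])

theorem continuous_coeff (k : ℕ) : Continuous fun t => (shrinkPath p t).coeff k := by
  simp only [shrinkPath, coeff_C_mul, comp_C_mul_X_coeff]
  fun_prop

@[simp]
theorem apply_zero : shrinkPath p 0 = p := by
  simp [shrinkPath]

theorem apply_one {p : ℂ[X]} (h0 : p.coeff 0 ≠ 0) : shrinkPath p 1 = 1 := by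
  simp [shrinkPath, exp_neg, exp_log h0, comp_zero, ← coeff_zero_eq_eval_zero, ← C_mul, h0]

theorem isRoot_iff {t : ℝ} {z : ℂ} :
    (shrinkPath p t).IsRoot z ↔ p.IsRoot ((1 - t) * z) := by
  simp [shrinkPath, exp_ne_zero]

theorem squarefree {p : ℂ[X]} (hp : Squarefree p) {t : ℝ} (ht : t ≠ 1) :
    Squarefree (shrinkPath p t) := by
  have hs : (1 - t : ℂ) ≠ 0 := by
    rw [sub_ne_zero, ne_comm]
    exact_mod_cast ht
  rw [shrinkPath, ← (associated_unit_mul_right _ _ (isUnit_C.mpr (exp_ne_zero _).isUnit))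
    |>.squarefree_iff]
  exact hp.comp_C_mul_X hs.isUnit

end shrinkPath

theorem stmt0_general (p : Polynomial ℂ)
    (hsimple : Squarefree p)
    (hdisk : ∀ z : ℂ, ‖z‖ < 1 → ¬ p.IsRoot z) :
    ∃ P : ℝ → Polynomial ℂ,
      (∀ k : ℕ, ContinuousOn (fun t => (P t).coeff k) (Set.Icc 0 1)) ∧
      P 0 = p ∧ P 1 = 1 ∧
      ∀ t ∈ Set.Icc (0:ℝ) 1,
        P t ≠ 0 ∧ Squarefree (P t) ∧ ∀ z : ℂ, ‖z‖ < 1 → ¬ (P t).IsRoot z := by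
  have h0 : p.coeff 0 ≠ 0 := by
    rw [coeff_zero_eq_eval_zero]
    exact hdisk 0 (by simp)
  refine ⟨shrinkPath p, fun k => (shrinkPath.continuous_coeff p k).continuousOn,
    shrinkPath.apply_zero p, shrinkPath.apply_one h0, fun t ⟨ht0, ht1⟩ => ?_⟩
  rcases eq_or_ne t 1 with rfl | hne
  · rw [shrinkPath.apply_one h0]
    exact ⟨one_ne_zero, squarefree_one, fun z _ => by simp⟩
  have hsq := shrinkPath.squarefree hsimple hne
  refine ⟨hsq.ne_zero, hsq, fun z hz => ?_⟩
  rw [shrinkPath.isRoot_iff]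
  apply hdisk
  calc ‖(1 - t : ℂ) * z‖ = |1 - t| * ‖z‖ := by
        rw [norm_mul, ← ofReal_one, ← ofReal_sub, norm_real, Real.norm_eq_abs]
    _ ≤ 1 * ‖z‖ := by gcongr; exact abs_le.mpr ⟨by linarith, by linarith⟩
    _ < 1 := by rwa [one_mul]

/-- A complex polynomial with only simple roots and no zeros in the
open unit disk can be connected to the constant polynomial 1 through a continuous
family of polynomials, each with no zeros in the open unit disk and only simple roots. -/
theorem stmt0 (p : Polynomial ℂ) (hp : p ≠ 0)
    (hsimple : Squarefree p)
    (hdisk : ∀ z : ℂ, ‖z‖ < 1 → ¬ p.IsRoot z) :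
    ∃ P : ℝ → Polynomial ℂ,
      (∀ k : ℕ, ContinuousOn (fun t => (P t).coeff k) (Set.Icc 0 1)) ∧
      P 0 = p ∧ P 1 = 1 ∧
      ∀ t ∈ Set.Icc (0:ℝ) 1,
        P t ≠ 0 ∧ Squarefree (P t) ∧ ∀ z : ℂ, ‖z‖ < 1 → ¬ (P t).IsRoot z :=
  stmt0_general p hsimple hdisk
end

section
/- Let V and V' be F₂-vector spaces each equipped with an endomorphism X satisfying X² = 0, and suppose V' is 2-dimensional with basis {1, X·1} where X(1) = X·1 and X(X·1) = 0. Equip V ⊗ V' with the two commuting endomorphisms X_p = X ⊗ id and X_q = id ⊗ X. Then the subspace {m ∈ V ⊗ V' : X_p(m) = X_q(m)} equals {(X v) ⊗ 1 + v ⊗ (X·1) : v ∈ V}. -/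
/-! Identifying `V ⊗ F₂²` with `V × V` along the basis `1, X·1`, the map `X_p` becomes `X × X` and
`X_q` becomes `(a, b) ↦ (0, a)`. So `X_p m = X_q m` says `X a = 0` and `a = X b`, i.e.
`m = X b ⊗ 1 + b ⊗ X·1`; conversely `X² = 0` makes every such `m` satisfy both equations. -/

open TensorProduct

/-- The model V' = F₂[X]/(X²) as F₂ × F₂ with basis 1 = (1,0) and X·1 = (0,1);
the action of X sends (a,b) = a·1 + b·X to a·X, i.e. (a,b) ↦ (0,a). -/
noncomputable def Xstd : (ZMod 2 × ZMod 2) →ₗ[ZMod 2] (ZMod 2 × ZMod 2) :=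
  LinearMap.prod 0 (LinearMap.fst (ZMod 2) (ZMod 2) (ZMod 2))

namespace TensorProduct

variable {R M : Type*} [CommSemiring R] [AddCommMonoid M] [Module R M]

variable (R M) in
noncomputable def prodSelfRightEquiv : M ⊗[R] (R × R) ≃ₗ[R] M × M :=
  prodRight R R M R R ≪≫ₗ (TensorProduct.rid R M).prodCongr (TensorProduct.rid R M)

@[simp] lemma prodSelfRightEquiv_tmul (m : M) (p : R × R) :
    prodSelfRightEquiv R M (m ⊗ₜ p) = (p.1 • m, p.2 • m) := by
  simp [prodSelfRightEquiv]

lemma prodSelfRightEquiv_symm_apply (a b : M) :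
    (prodSelfRightEquiv R M).symm (a, b) = a ⊗ₜ (1, 0) + b ⊗ₜ (0, 1) := by
  simp [LinearEquiv.symm_apply_eq]

lemma prodSelfRightEquiv_map_id (f : M →ₗ[R] M) (t : M ⊗[R] (R × R)) :
    prodSelfRightEquiv R M (map f LinearMap.id t) = f.prodMap f (prodSelfRightEquiv R M t) := by
  induction t using TensorProduct.induction_on with
  | zero => simp only [map_zero]
  | tmul m p => simp
  | add x y hx hy => simp_all

lemma prodSelfRightEquiv_map_id_shift (t : M ⊗[R] (R × R)) :
    prodSelfRightEquiv R M (map LinearMap.id (LinearMap.prod 0 (LinearMap.fst R R R)) t) =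
      LinearMap.inr R M M (prodSelfRightEquiv R M t).1 := by
  induction t using TensorProduct.induction_on with
  | zero => simp only [map_zero, Prod.fst_zero]
  | tmul m p => simp
  | add x y hx hy => simp_all

end TensorProduct

lemma LinearMap.prodMap_self_eq_inr_fst_iff {R M : Type*} [Semiring R] [AddCommMonoid M]
    [Module R M] {X : M →ₗ[R] M} (hX : X ∘ₗ X = 0) (p : M × M) :
    X.prodMap X p = LinearMap.inr R M M p.1 ↔ ∃ v, p = (X v, v) := by
  obtain ⟨a, b⟩ := p
  simp only [LinearMap.prodMap_apply, LinearMap.inr_apply, Prod.mk.injEq]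
  constructor
  · rintro ⟨-, rfl⟩
    exact ⟨b, rfl, rfl⟩
  · rintro ⟨v, rfl, rfl⟩
    exact ⟨LinearMap.congr_fun hX _, rfl⟩

/-- For V an F₂-vector space with endomorphism X with X² = 0 and
V' = F₂[X]/(X²), the subspace {m ∈ V ⊗ V' : (X⊗id)m = (id⊗X)m} equals
{(Xv) ⊗ 1 + v ⊗ X : v ∈ V}. -/
theorem stmt4 (V : Type*) [AddCommGroup V] [Module (ZMod 2) V]
    (X : V →ₗ[ZMod 2] V) (hX : X ∘ₗ X = 0) :
    {m : V ⊗[ZMod 2] (ZMod 2 × ZMod 2) |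
        TensorProduct.map X LinearMap.id m = TensorProduct.map LinearMap.id Xstd m} =
      {m | ∃ v : V, m = (X v) ⊗ₜ[ZMod 2] ((1:ZMod 2), (0:ZMod 2))
          + v ⊗ₜ[ZMod 2] ((0:ZMod 2), (1:ZMod 2))} := by
  ext m
  obtain ⟨p, rfl⟩ := (prodSelfRightEquiv (ZMod 2) V).symm.surjective m
  rw [Set.mem_ofPred_eq, ← (prodSelfRightEquiv (ZMod 2) V).injective.eq_iff,
    prodSelfRightEquiv_map_id, Xstd, prodSelfRightEquiv_map_id_shift,
    LinearEquiv.apply_symm_apply, Set.mem_ofPred_eq]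
  simp only [← prodSelfRightEquiv_symm_apply, EmbeddingLike.apply_eq_iff_eq]
  exact LinearMap.prodMap_self_eq_inr_fst_iff hX p
end

section
/- Let V be an F₂-vector space with an endomorphism X satisfying X² = 0, and let V' = F₂[X]/(X²) with its natural X-action. Then the map v ↦ (X v) ⊗ 1 + v ⊗ X from V to the subspace {m ∈ V ⊗_{F₂} V' : (X ⊗ id)(m) = (id ⊗ X)(m)} is an F₂-linear isomorphism. -/
/-!
Writing `V ⊗ V' ≅ V × V` along the basis `{1, X}`, the element `p ⊗ 1 + q ⊗ X` is the pair
`(p, q)`; then `X ⊗ id` acts as `(p, q) ↦ (X p, X q)` and `id ⊗ X` as `(p, q) ↦ (0, p)`.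
The subspace where the two actions agree is `{(p, q) | X p = 0 ∧ X q = p}`, which by `X² = 0` is the graph of `X`
read as `q ↦ (X q, q)`, and the map of the theorem is exactly `v ↦ (X v, v)`.
-/

open TensorProduct

namespace TensorProduct

variable {R V : Type*} [CommSemiring R] [AddCommMonoid V] [Module R V]

variable (R V) in
noncomputable def prodSelfRight : V ⊗[R] (R × R) ≃ₗ[R] V × V :=
  prodRight R R V R R ≪≫ₗ (TensorProduct.rid R V).prodCongr (TensorProduct.rid R V)

@[simp]
theorem prodSelfRight_tmul (x : V) (c : R × R) :
    prodSelfRight R V (x ⊗ₜ c) = (c.1 • x, c.2 • x) := by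
  simp [prodSelfRight]

theorem prodSelfRight_symm_apply (p q : V) :
    (prodSelfRight R V).symm (p, q) = p ⊗ₜ ((1 : R), (0 : R)) + q ⊗ₜ ((0 : R), (1 : R)) := by
  rw [LinearEquiv.symm_apply_eq]
  simp

theorem prodSelfRight_map_left (f : V →ₗ[R] V) (m : V ⊗[R] (R × R)) :
    prodSelfRight R V (map f LinearMap.id m) = f.prodMap f (prodSelfRight R V m) := by
  induction m using TensorProduct.induction_on with
  | zero => simpa using Prod.mk_zero_zero.symm
  | tmul x c => simp
  | add m n hm hn => simp_all

theorem prodSelfRight_map_shift (m : V ⊗[R] (R × R)) :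
    prodSelfRight R V (map LinearMap.id ((0 : R × R →ₗ[R] R).prod (LinearMap.fst R R R)) m) =
      (0, (prodSelfRight R V m).1) := by
  induction m using TensorProduct.induction_on with
  | zero => simpa using Prod.mk_zero_zero.symm
  | tmul x c => simp
  | add m n hm hn => simp_all

end TensorProduct

namespace LinearMap

variable {R V : Type*} [Semiring R] [AddCommMonoid V] [Module R V]

theorem range_apply_pair_of_comp_self_eq_zero {f : V →ₗ[R] V} (hf : f ∘ₗ f = 0) :
    Set.range (fun v => (f v, v)) = {x : V × V | f x.1 = 0 ∧ f x.2 = x.1} := by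
  ext ⟨p, q⟩
  constructor
  · rintro ⟨v, hv⟩
    obtain ⟨rfl, rfl⟩ := Prod.ext_iff.mp hv
    exact ⟨LinearMap.congr_fun hf v, rfl⟩
  · rintro ⟨-, hq⟩
    exact ⟨q, Prod.ext hq rfl⟩

end LinearMap

theorem setOf_map_eq_map_Xstd {V : Type*} [AddCommMonoid V] [Module (ZMod 2) V]
    (X : V →ₗ[ZMod 2] V) :
    {m | map X LinearMap.id m = map LinearMap.id Xstd m} =
      prodSelfRight (ZMod 2) V ⁻¹' {x : V × V | X x.1 = 0 ∧ X x.2 = x.1} := by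
  ext m
  rw [Set.mem_ofPred_eq, ← (prodSelfRight (ZMod 2) V).injective.eq_iff, prodSelfRight_map_left,
    Xstd, prodSelfRight_map_shift]
  simp [Prod.ext_iff]

/-- The map v ↦ (Xv) ⊗ 1 + v ⊗ X is an F₂-linear isomorphism from V
onto the subspace {m ∈ V ⊗ V' : (X⊗id)m = (id⊗X)m}, where V' = F₂[X]/(X²). -/
theorem stmt5 (V : Type*) [AddCommGroup V] [Module (ZMod 2) V]
    (X : V →ₗ[ZMod 2] V) (hX : X ∘ₗ X = 0) :
    Function.Injective (fun v : V =>
        (X v) ⊗ₜ[ZMod 2] ((1:ZMod 2), (0:ZMod 2))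
          + v ⊗ₜ[ZMod 2] ((0:ZMod 2), (1:ZMod 2))) ∧
    Set.range (fun v : V =>
        (X v) ⊗ₜ[ZMod 2] ((1:ZMod 2), (0:ZMod 2))
          + v ⊗ₜ[ZMod 2] ((0:ZMod 2), (1:ZMod 2))) =
      {m : V ⊗[ZMod 2] (ZMod 2 × ZMod 2) |
        TensorProduct.map X LinearMap.id m = TensorProduct.map LinearMap.id Xstd m} := by
  have hφ : (fun v : V => (X v) ⊗ₜ[ZMod 2] ((1:ZMod 2), (0:ZMod 2))
      + v ⊗ₜ[ZMod 2] ((0:ZMod 2), (1:ZMod 2))) =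
        (prodSelfRight (ZMod 2) V).symm ∘ fun v => (X v, v) :=
    funext fun v => (prodSelfRight_symm_apply (X v) v).symm
  rw [hφ, setOf_map_eq_map_Xstd, Set.range_comp,
    LinearMap.range_apply_pair_of_comp_self_eq_zero hX, LinearEquiv.image_eq_preimage_symm,
    LinearEquiv.symm_symm]
  exact ⟨(prodSelfRight (ZMod 2) V).symm.injective.comp fun v w h => (Prod.ext_iff.mp h).2, rfl⟩
end
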